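/- arXiv:1209.5812 — 5 statements merged into one kernel-verified Lean document; each statement's English description precedes it below -/
import Mathlib

section
/- Let V be a 3×3 complex matrix all of whose entries are nonzero, and let m and n be 3×3 matrices with nonnegative integer entries. If for all real phases φ₁,φ₂,φ₃,ψ₁,ψ₂,ψ₃ the value of P(m,n) at the rephased matrix (with entries e^{iφ_i} V_{ij} e^{iψ_j}) equals P(m,n)(V), then for every i ∈ {1,2,3} the i-th row sum of m equals the i-th row sum of n and the i-th column sum of m equals the i-th column sum of n. -/
open scoped BigOperators

/-- The monomial `P(m,n)(V) = ∏ (V i j)^(m i j) · ∏ (conj (V k l))^(n k l)`. -/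
noncomputable def Pmono (m n : Matrix (Fin 3) (Fin 3) ℕ)
    (V : Matrix (Fin 3) (Fin 3) ℂ) : ℂ :=
  (∏ i : Fin 3, ∏ j : Fin 3, (V i j) ^ (m i j)) *
    ∏ k : Fin 3, ∏ l : Fin 3, (starRingEnd ℂ (V k l)) ^ (n k l)

/-- Rephasing of `V` by phases `φ i` (rows) and `ψ j` (columns). -/
noncomputable def rephase (φ ψ : Fin 3 → ℝ) (V : Matrix (Fin 3) (Fin 3) ℂ) :
    Matrix (Fin 3) (Fin 3) ℂ :=
  fun i j => Complex.exp ((φ i : ℂ) * Complex.I) * V i j * Complex.exp ((ψ j : ℂ) * Complex.I)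

/-!
Rephasing multiplies the entry `V i j` by the unit `e^{i(φᵢ + ψⱼ)}`, hence multiplies `P(m,n)(V)` by
`e^{i(∑ᵢ φᵢ (rᵢ(m) - rᵢ(n)) + ∑ⱼ ψⱼ (cⱼ(m) - cⱼ(n)))}`, where `rᵢ`, `cⱼ` are row and column sums.
As `P(m,n)(V) ≠ 0`, invariance makes this phase `1` for all `φ, ψ`; but switching on only
`φᵢ = π / (rᵢ(m) - rᵢ(n))` would make it `-1`.
-/

open Complex ComplexConjugate Finset

lemma conj_exp_ofReal_mul_I (x : ℝ) : conj (exp (x * I)) = exp (-x * I) := by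
  rw [← exp_conj, map_mul, conj_ofReal, conj_I, neg_mul, mul_neg]

lemma exp_ofReal_mul_I_mul_pow_mul_conj_pow (x : ℝ) (z : ℂ) (a b : ℕ) :
    (exp (x * I) * z) ^ a * conj (exp (x * I) * z) ^ b =
      exp ((((a : ℝ) - b) * x : ℝ) * I) * (z ^ a * conj z ^ b) := by
  rw [map_mul, conj_exp_ofReal_mul_I, mul_pow, mul_pow, ← exp_nat_mul, ← exp_nat_mul,
    mul_mul_mul_comm, ← exp_add]
  push_cast
  ring_nf

lemma sum_sum_mul_add {ι κ : Type*} [Fintype ι] [Fintype κ] (a : ι → κ → ℝ)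
    (φ : ι → ℝ) (ψ : κ → ℝ) :
    ∑ i, ∑ j, a i j * (φ i + ψ j) = ∑ i, φ i * ∑ j, a i j + ∑ j, ψ j * ∑ i, a i j := by
  simp only [mul_add, sum_add_distrib, mul_sum]
  rw [sum_comm (f := fun i j => a i j * ψ j)]
  simp only [mul_comm]

lemma eq_zero_of_forall_exp_sum_mul_I_eq_one {ι : Type*} [Fintype ι] [DecidableEq ι]
    {c : ι → ℝ} (h : ∀ φ : ι → ℝ, exp ((∑ i, φ i * c i : ℝ) * I) = 1) : c = 0 := by
  funext i
  by_contra hc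
  have := h (Pi.single i (Real.pi / c i))
  simp only [Pi.single_apply, ite_mul, zero_mul, sum_ite_eq', mem_univ, if_true] at this
  rw [div_mul_cancel₀ _ hc, exp_pi_mul_I] at this
  norm_num at this

lemma rephase_apply (φ ψ : Fin 3 → ℝ) (V : Matrix (Fin 3) (Fin 3) ℂ) (i j : Fin 3) :
    rephase φ ψ V i j = exp ((φ i + ψ j : ℝ) * I) * V i j := by
  rw [rephase, ofReal_add, add_mul, exp_add]
  ring

lemma Pmono_eq_prod (m n : Matrix (Fin 3) (Fin 3) ℕ) (V : Matrix (Fin 3) (Fin 3) ℂ) :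
    Pmono m n V = ∏ i, ∏ j, V i j ^ m i j * conj (V i j) ^ n i j := by
  simp only [Pmono, prod_mul_distrib]

lemma Pmono_ne_zero (m n : Matrix (Fin 3) (Fin 3) ℕ) {V : Matrix (Fin 3) (Fin 3) ℂ}
    (hV : ∀ i j, V i j ≠ 0) : Pmono m n V ≠ 0 := by
  rw [Pmono_eq_prod]
  exact prod_ne_zero_iff.2 fun i _ => prod_ne_zero_iff.2 fun j _ =>
    mul_ne_zero (pow_ne_zero _ (hV i j)) (pow_ne_zero _ ((map_ne_zero _).2 (hV i j)))

lemma Pmono_rephase (m n : Matrix (Fin 3) (Fin 3) ℕ) (φ ψ : Fin 3 → ℝ)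
    (V : Matrix (Fin 3) (Fin 3) ℂ) :
    Pmono m n (rephase φ ψ V) =
      exp ((∑ i, φ i * ∑ j, ((m i j : ℝ) - n i j) + ∑ j, ψ j * ∑ i, ((m i j : ℝ) - n i j) : ℝ)
        * I) * Pmono m n V := by
  simp only [Pmono_eq_prod, rephase_apply, exp_ofReal_mul_I_mul_pow_mul_conj_pow,
    prod_mul_distrib, ← exp_sum, ← sum_sum_mul_add, ofReal_sum, sum_mul]

theorem rephasing_invariance_forces_equal_row_and_column_sums
    (V : Matrix (Fin 3) (Fin 3) ℂ) (hV : ∀ i j : Fin 3, V i j ≠ 0)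
    (m n : Matrix (Fin 3) (Fin 3) ℕ)
    (h : ∀ φ ψ : Fin 3 → ℝ, Pmono m n (rephase φ ψ V) = Pmono m n V) :
    (∀ i : Fin 3, ∑ j : Fin 3, m i j = ∑ j : Fin 3, n i j) ∧
      (∀ j : Fin 3, ∑ i : Fin 3, m i j = ∑ i : Fin 3, n i j) := by
  have phase_trivial : ∀ φ ψ : Fin 3 → ℝ,
      exp ((∑ i, φ i * ∑ j, ((m i j : ℝ) - n i j) + ∑ j, ψ j * ∑ i, ((m i j : ℝ) - n i j) : ℝ)
        * I) = 1 := fun φ ψ =>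
    (mul_eq_right₀ (Pmono_ne_zero m n hV)).1 ((Pmono_rephase m n φ ψ V).symm.trans (h φ ψ))
  have rows := eq_zero_of_forall_exp_sum_mul_I_eq_one fun φ => by
    simpa only [Pi.zero_apply, zero_mul, sum_const_zero, add_zero] using phase_trivial φ 0
  have cols := eq_zero_of_forall_exp_sum_mul_I_eq_one fun ψ => by
    simpa only [Pi.zero_apply, zero_mul, sum_const_zero, zero_add] using phase_trivial 0 ψ
  refine ⟨fun i => ?_, fun j => ?_⟩
  · have := congrFun rows i
    rw [Pi.zero_apply, sum_sub_distrib, sub_eq_zero] at this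
    exact_mod_cast this
  · have := congrFun cols j
    rw [Pi.zero_apply, sum_sub_distrib, sub_eq_zero] at this
    exact_mod_cast this
end

section
/- Let p be a p-matrix having either exactly 3 positive and exactly 4 negative entries, or exactly 4 positive and exactly 3 negative entries (hence exactly 2 zero entries). Then there exist positive integers n₁, n₂, a 4th-order fundamental p-matrix F and a 6th-order fundamental p-matrix G such that p = n₁F + n₂G. -/
open scoped BigOperators

/-- A p-matrix: a 3×3 integer matrix all of whose row sums and column sums vanish. -/
def IsPMatrix (p : Matrix (Fin 3) (Fin 3) ℤ) : Prop :=
  (∀ i : Fin 3, ∑ j : Fin 3, p i j = 0) ∧ (∀ j : Fin 3, ∑ i : Fin 3, p i j = 0)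

/-- A fundamental p-matrix: a nonzero p-matrix with all entries in {-1, 0, 1}. -/
def IsFundamental (p : Matrix (Fin 3) (Fin 3) ℤ) : Prop :=
  IsPMatrix p ∧ p ≠ 0 ∧ ∀ i j : Fin 3, p i j = -1 ∨ p i j = 0 ∨ p i j = 1

/-- The number of nonzero entries of a 3×3 integer matrix. -/
def suppCard (p : Matrix (Fin 3) (Fin 3) ℤ) : ℕ :=
  (Finset.univ.filter fun ij : Fin 3 × Fin 3 => p ij.1 ij.2 ≠ 0).card

/-- The number of positive entries of a 3×3 integer matrix. -/
def posCard (p : Matrix (Fin 3) (Fin 3) ℤ) : ℕ :=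
  (Finset.univ.filter fun ij : Fin 3 × Fin 3 => 0 < p ij.1 ij.2).card

/-- The number of negative entries of a 3×3 integer matrix. -/
def negCard (p : Matrix (Fin 3) (Fin 3) ℤ) : ℕ :=
  (Finset.univ.filter fun ij : Fin 3 × Fin 3 => p ij.1 ij.2 < 0).card

/-- The number of zero entries of a 3×3 integer matrix. -/
def zeroCard (p : Matrix (Fin 3) (Fin 3) ℤ) : ℕ :=
  (Finset.univ.filter fun ij : Fin 3 × Fin 3 => p ij.1 ij.2 = 0).card

/-!
Row and column sums force the two zeros of `p` into different rows and different columns: a row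
or column with two zeros has a third. Permuting rows and columns moves them to `(0,0)` and
`(1,1)`, where a p-matrix is determined by `b = p 0 1` and `c = p 1 0`, and `p 2 2 = b + c`; as
there are no further zeros, `b ≠ 0` and `b + c ≠ 0`. Subtracting `|b|` copies of the 6th-order
fundamental matrix `sign b • !![0, 1, -1; -1, 0, 1; 1, -1, 0]` clears the `b` entries and leaves
`|b + c|` copies of the 4th-order fundamental matrix
`sign (b + c) • !![0, 0, 0; 1, 0, -1; -1, 0, 1]`.
-/

lemma posCard_add_negCard_add_zeroCard (p : Matrix (Fin 3) (Fin 3) ℤ) :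
    posCard p + negCard p + zeroCard p = 9 := by
  simp only [posCard, negCard, zeroCard, Finset.card_filter, ← Finset.sum_add_distrib]
  rw [Finset.sum_congr rfl fun ij _ => show _ = 1 by split_ifs <;> omega]
  simp

lemma card_filter_submatrix {m n α : Type*} [Fintype m] [Fintype n] (P : α → Prop)
    [DecidablePred P] (p : Matrix m n α) (σ : m ≃ m) (τ : n ≃ n) :
    (Finset.univ.filter fun ij : m × n => P (p.submatrix σ τ ij.1 ij.2)).card =
      (Finset.univ.filter fun ij : m × n => P (p ij.1 ij.2)).card :=
  Finset.card_equiv (σ.prodCongr τ) fun _ => by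
    simp only [Finset.mem_filter, Finset.mem_univ, true_and]; rfl

lemma suppCard_submatrix (p : Matrix (Fin 3) (Fin 3) ℤ) (σ τ : Equiv.Perm (Fin 3)) :
    suppCard (p.submatrix σ τ) = suppCard p :=
  card_filter_submatrix (· ≠ 0) p σ τ

lemma zeroCard_submatrix (p : Matrix (Fin 3) (Fin 3) ℤ) (σ τ : Equiv.Perm (Fin 3)) :
    zeroCard (p.submatrix σ τ) = zeroCard p :=
  card_filter_submatrix (· = 0) p σ τ

lemma three_le_zeroCard {p : Matrix (Fin 3) (Fin 3) ℤ} {a b c : Fin 3 × Fin 3}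
    (hab : a ≠ b) (hac : a ≠ c) (hbc : b ≠ c)
    (ha : p a.1 a.2 = 0) (hb : p b.1 b.2 = 0) (hc : p c.1 c.2 = 0) : 3 ≤ zeroCard p := by
  rw [← Finset.card_eq_three.mpr ⟨a, b, c, hab, hac, hbc, rfl⟩]
  refine Finset.card_le_card fun x hx => ?_
  simp only [Finset.mem_insert, Finset.mem_singleton] at hx
  rcases hx with rfl | rfl | rfl <;> simpa

lemma eq_zero_of_sum_fin_three_eq_zero {M : Type*} [AddCommMonoid M] {f : Fin 3 → M}
    (h : ∑ j, f j = 0) {j₀ j₁ : Fin 3} (h01 : j₀ ≠ j₁) (h0 : f j₀ = 0)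
    (h1 : f j₁ = 0) (k : Fin 3) : f k = 0 := by
  rw [Fin.sum_univ_three] at h
  fin_cases j₀ <;> fin_cases j₁ <;> fin_cases k <;> simp_all

lemma exists_ne_ne_fin_three (a b : Fin 3) : ∃ k, a ≠ k ∧ b ≠ k := by
  revert a b; decide

lemma exists_perm_fin_three {a b : Fin 3} (hab : a ≠ b) :
    ∃ σ : Equiv.Perm (Fin 3), σ 0 = a ∧ σ 1 = b := by
  revert a b; decide

lemma three_le_zeroCard_of_row {p : Matrix (Fin 3) (Fin 3) ℤ} (hp : IsPMatrix p)
    {i j j' : Fin 3} (hj : j ≠ j') (h : p i j = 0) (h' : p i j' = 0) : 3 ≤ zeroCard p := by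
  obtain ⟨k, hjk, hj'k⟩ := exists_ne_ne_fin_three j j'
  exact three_le_zeroCard (a := (i, j)) (b := (i, j')) (c := (i, k)) (by simpa) (by simpa)
    (by simpa) h h' (eq_zero_of_sum_fin_three_eq_zero (hp.1 i) hj h h' k)

lemma three_le_zeroCard_of_col {p : Matrix (Fin 3) (Fin 3) ℤ} (hp : IsPMatrix p)
    {i i' j : Fin 3} (hi : i ≠ i') (h : p i j = 0) (h' : p i' j = 0) : 3 ≤ zeroCard p := by
  obtain ⟨k, hik, hi'k⟩ := exists_ne_ne_fin_three i i'
  exact three_le_zeroCard (a := (i, j)) (b := (i', j)) (c := (k, j)) (by simpa) (by simpa)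
    (by simpa) h h' (eq_zero_of_sum_fin_three_eq_zero (f := fun i => p i j) (hp.2 j) hi h h' k)

lemma exists_perm_zero_zero_one_one {p : Matrix (Fin 3) (Fin 3) ℤ} (hp : IsPMatrix p)
    (hz : zeroCard p = 2) :
    ∃ σ τ : Equiv.Perm (Fin 3), p (σ 0) (τ 0) = 0 ∧ p (σ 1) (τ 1) = 0 := by
  obtain ⟨x, y, hxy, hxy_zero⟩ := Finset.card_eq_two.mp hz
  have hx : p x.1 x.2 = 0 := by simpa using (Finset.ext_iff.mp hxy_zero x).mpr (by simp)
  have hy : p y.1 y.2 = 0 := by simpa using (Finset.ext_iff.mp hxy_zero y).mpr (by simp)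
  have hrow : x.1 ≠ y.1 := fun h => by
    have := three_le_zeroCard_of_row hp (fun h' => hxy (Prod.ext h h')) hx (h ▸ hy)
    omega
  have hcol : x.2 ≠ y.2 := fun h => by
    have := three_le_zeroCard_of_col hp hrow hx (h ▸ hy)
    omega
  obtain ⟨σ, hσ0, hσ1⟩ := exists_perm_fin_three hrow
  obtain ⟨τ, hτ0, hτ1⟩ := exists_perm_fin_three hcol
  exact ⟨σ, τ, by rwa [hσ0, hτ0], by rwa [hσ1, hτ1]⟩

lemma isPMatrix_submatrix {p : Matrix (Fin 3) (Fin 3) ℤ} (hp : IsPMatrix p)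
    (σ τ : Equiv.Perm (Fin 3)) : IsPMatrix (p.submatrix σ τ) :=
  ⟨fun i => (Equiv.sum_comp τ (p (σ i))).trans (hp.1 (σ i)),
    fun j => (Equiv.sum_comp σ (p · (τ j))).trans (hp.2 (τ j))⟩

lemma isFundamental_submatrix {p : Matrix (Fin 3) (Fin 3) ℤ} (hp : IsFundamental p)
    (σ τ : Equiv.Perm (Fin 3)) : IsFundamental (p.submatrix σ τ) := by
  obtain ⟨hpm, hne, hentries⟩ := hp
  refine ⟨isPMatrix_submatrix hpm σ τ, fun h => hne ?_, fun i j => hentries (σ i) (τ j)⟩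
  simpa using congrArg (·.submatrix σ.symm τ.symm) h

def HasFundamentalDecomposition (p : Matrix (Fin 3) (Fin 3) ℤ) : Prop :=
  ∃ (n₁ n₂ : ℕ) (F G : Matrix (Fin 3) (Fin 3) ℤ),
      0 < n₁ ∧ 0 < n₂ ∧
      IsFundamental F ∧ suppCard F = 4 ∧
      IsFundamental G ∧ suppCard G = 6 ∧
      p = (n₁ : ℤ) • F + (n₂ : ℤ) • G

lemma HasFundamentalDecomposition.of_submatrix {p : Matrix (Fin 3) (Fin 3) ℤ}
    (σ τ : Equiv.Perm (Fin 3)) (h : HasFundamentalDecomposition (p.submatrix σ τ)) :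
    HasFundamentalDecomposition p := by
  obtain ⟨n₁, n₂, F, G, hn₁, hn₂, hF, hF4, hG, hG6, hpFG⟩ := h
  refine ⟨n₁, n₂, F.submatrix σ.symm τ.symm, G.submatrix σ.symm τ.symm, hn₁, hn₂,
    isFundamental_submatrix hF _ _, (suppCard_submatrix F _ _).trans hF4,
    isFundamental_submatrix hG _ _, (suppCard_submatrix G _ _).trans hG6, ?_⟩
  ext i j
  simpa only [Matrix.submatrix_apply, Matrix.add_apply, Matrix.smul_apply,
    Equiv.apply_symm_apply] using congrFun₂ hpFG (σ.symm i) (τ.symm j)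

def canonicalPMatrix (b c : ℤ) : Matrix (Fin 3) (Fin 3) ℤ :=
  !![0, b, -b; c, 0, -c; -c, -b, b + c]

lemma smul_canonicalPMatrix_add (m n b c b' c' : ℤ) :
    m • canonicalPMatrix b c + n • canonicalPMatrix b' c' =
      canonicalPMatrix (m * b + n * b') (m * c + n * c') := by
  ext i j
  fin_cases i <;> fin_cases j <;> simp [canonicalPMatrix] <;> ring

lemma isPMatrix_canonicalPMatrix (b c : ℤ) : IsPMatrix (canonicalPMatrix b c) := by
  simp [IsPMatrix, canonicalPMatrix, Fin.forall_fin_succ, Fin.sum_univ_three]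
  ring

lemma isFundamental_canonicalPMatrix {b c : ℤ} (hb : |b| ≤ 1) (hc : |c| ≤ 1)
    (hbc : |b + c| ≤ 1) (hne : b ≠ 0 ∨ c ≠ 0) : IsFundamental (canonicalPMatrix b c) := by
  rw [abs_le] at hb hc hbc
  refine ⟨isPMatrix_canonicalPMatrix b c, fun h => ?_, fun i j => ?_⟩
  · have h01 := congrFun₂ h 0 1
    have h10 := congrFun₂ h 1 0
    simp only [canonicalPMatrix, Matrix.of_apply, Matrix.cons_val', Matrix.cons_val_zero,
      Matrix.cons_val_one, Matrix.zero_apply] at h01 h10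
    tauto
  · fin_cases i <;> fin_cases j <;> simp [canonicalPMatrix] <;> omega

lemma isFundamental_and_suppCard_canonicalPMatrix_zero {s : ℤ} (hs : s = 1 ∨ s = -1) :
    IsFundamental (canonicalPMatrix 0 s) ∧ suppCard (canonicalPMatrix 0 s) = 4 := by
  rcases hs with rfl | rfl <;>
    exact ⟨isFundamental_canonicalPMatrix (by norm_num) (by norm_num) (by norm_num) (by norm_num),
      by decide⟩

lemma isFundamental_and_suppCard_canonicalPMatrix_self_neg {s : ℤ} (hs : s = 1 ∨ s = -1) :
    IsFundamental (canonicalPMatrix s (-s)) ∧ suppCard (canonicalPMatrix s (-s)) = 6 := by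
  rcases hs with rfl | rfl <;>
    exact ⟨isFundamental_canonicalPMatrix (by norm_num) (by norm_num) (by norm_num) (by norm_num),
      by decide⟩

lemma eq_canonicalPMatrix {q : Matrix (Fin 3) (Fin 3) ℤ} (hq : IsPMatrix q)
    (h00 : q 0 0 = 0) (h11 : q 1 1 = 0) : q = canonicalPMatrix (q 0 1) (q 1 0) := by
  obtain ⟨hrow, hcol⟩ := hq
  simp only [Fin.sum_univ_three] at hrow hcol
  have := hrow 0; have := hrow 1; have := hrow 2
  have := hcol 0; have := hcol 1; have := hcol 2
  ext i j
  fin_cases i <;> fin_cases j <;> simp [canonicalPMatrix] <;> omega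

lemma Int.sign_eq_one_or_neg_one_of_ne_zero {b : ℤ} (hb : b ≠ 0) :
    b.sign = 1 ∨ b.sign = -1 := by
  rcases hb.lt_or_gt with h | h
  · exact Or.inr (Int.sign_eq_neg_one_of_neg h)
  · exact Or.inl (Int.sign_eq_one_of_pos h)

lemma hasFundamentalDecomposition_canonicalPMatrix {b c : ℤ} (hb : b ≠ 0) (hbc : b + c ≠ 0) :
    HasFundamentalDecomposition (canonicalPMatrix b c) := by
  have hs := Int.sign_eq_one_or_neg_one_of_ne_zero hb
  have ht := Int.sign_eq_one_or_neg_one_of_ne_zero hbc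
  obtain ⟨hF, hF4⟩ := isFundamental_and_suppCard_canonicalPMatrix_zero ht
  obtain ⟨hG, hG6⟩ := isFundamental_and_suppCard_canonicalPMatrix_self_neg hs
  refine ⟨(b + c).natAbs, b.natAbs, _, _, by omega, by omega, hF, hF4, hG, hG6, ?_⟩
  rw [smul_canonicalPMatrix_add]
  congr 1
  · linear_combination -(Int.sign_mul_natAbs b)
  · linear_combination Int.sign_mul_natAbs b - Int.sign_mul_natAbs (b + c)

lemma hasFundamentalDecomposition_of_zeroCard_eq_two {q : Matrix (Fin 3) (Fin 3) ℤ}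
    (hq : IsPMatrix q) (hz : zeroCard q = 2) (h00 : q 0 0 = 0) (h11 : q 1 1 = 0) :
    HasFundamentalDecomposition q := by
  have hcanon := eq_canonicalPMatrix hq h00 h11
  have h22 : q 2 2 = q 0 1 + q 1 0 := by simpa [canonicalPMatrix] using congrFun₂ hcanon 2 2
  rw [hcanon]
  apply hasFundamentalDecomposition_canonicalPMatrix
  · intro h01
    have := three_le_zeroCard (a := (0, 0)) (b := (1, 1)) (c := (0, 1)) (by decide) (by decide)
      (by decide) h00 h11 h01
    omega
  · intro h
    have := three_le_zeroCard (a := (0, 0)) (b := (1, 1)) (c := (2, 2)) (by decide) (by decide)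
      (by decide) h00 h11 (h22.trans h)
    omega

theorem p_matrix_two_zero_entries_decomposition
    (p : Matrix (Fin 3) (Fin 3) ℤ) (hp : IsPMatrix p)
    (hsigns : (posCard p = 3 ∧ negCard p = 4) ∨ (posCard p = 4 ∧ negCard p = 3)) :
    ∃ (n₁ n₂ : ℕ) (F G : Matrix (Fin 3) (Fin 3) ℤ),
      0 < n₁ ∧ 0 < n₂ ∧
      IsFundamental F ∧ suppCard F = 4 ∧
      IsFundamental G ∧ suppCard G = 6 ∧
      p = (n₁ : ℤ) • F + (n₂ : ℤ) • G := by
  have hz : zeroCard p = 2 := by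
    have := posCard_add_negCard_add_zeroCard p
    omega
  obtain ⟨σ, τ, h00, h11⟩ := exists_perm_zero_zero_one_one hp hz
  exact HasFundamentalDecomposition.of_submatrix σ τ <|
    hasFundamentalDecomposition_of_zeroCard_eq_two (isPMatrix_submatrix hp σ τ)
      ((zeroCard_submatrix p σ τ).trans hz) h00 h11
end

section
/- Let V be a 3×3 unitary complex matrix. Then Im(V₁₂V₂₃ conj(V₁₃) conj(V₂₂)) + Im(V₂₁V₃₃ conj(V₂₃) conj(V₃₁)) = 0, i.e. the rephasing invariants J_A = Im(V₁₂V₂₃V₁₃*V₂₂*) and J_B = Im(V₂₁V₃₃V₂₃*V₃₁*) satisfy J_A + J_B = 0. -/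
/-!
Orthogonality of the second and third columns and of the second and third rows of `V` gives
`V₁₂V₁₃* = -V₂₂V₂₃* - V₃₂V₃₃*` and `V₂₁V₃₁* = -V₂₂V₃₂* - V₂₃V₃₃*`. Substituting these into `J_A`
and `J_B` leaves `-|V₂₂|²|V₂₃|² - |V₂₃|²|V₃₃|² - (z + z*)` with `z = V₃₂V₃₃*V₂₃V₂₂*`, which is real.
-/

namespace Matrix

variable {n α : Type*} [Fintype n] [DecidableEq n] [CommRing α] [StarRing α]
  {U : Matrix n n α}

theorem sum_mul_star_eq_zero_of_mem_unitaryGroup (hU : U ∈ unitaryGroup n α) {i j : n}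
    (hij : i ≠ j) : ∑ k, U i k * star (U j k) = 0 := by
  simpa [mul_apply, one_apply_ne hij] using congrFun₂ (mem_unitaryGroup_iff.mp hU) i j

theorem sum_star_mul_eq_zero_of_mem_unitaryGroup (hU : U ∈ unitaryGroup n α) {i j : n}
    (hij : i ≠ j) : ∑ k, star (U k i) * U k j = 0 := by
  simpa [mul_apply, one_apply_ne hij] using congrFun₂ (mem_unitaryGroup_iff'.mp hU) i j

end Matrix

open ComplexConjugate in
theorem JA_add_JB_eq_zero
    (V : Matrix (Fin 3) (Fin 3) ℂ) (hV : V ∈ Matrix.unitaryGroup (Fin 3) ℂ) :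
    (V 0 1 * V 1 2 * starRingEnd ℂ (V 0 2) * starRingEnd ℂ (V 1 1)).im +
      (V 1 0 * V 2 2 * starRingEnd ℂ (V 1 2) * starRingEnd ℂ (V 2 0)).im = 0 := by
  have hcol := Matrix.sum_star_mul_eq_zero_of_mem_unitaryGroup hV (i := 2) (j := 1) (by decide)
  have hrow := Matrix.sum_mul_star_eq_zero_of_mem_unitaryGroup hV (i := 1) (j := 2) (by decide)
  simp only [Fin.sum_univ_three, Complex.star_def] at hcol hrow
  set z := V 2 1 * conj (V 2 2) * V 1 2 * conj (V 1 1)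
  have hreal : V 0 1 * V 1 2 * conj (V 0 2) * conj (V 1 1) +
      V 1 0 * V 2 2 * conj (V 1 2) * conj (V 2 0) =
      -(V 1 1 * conj (V 1 1) * (V 1 2 * conj (V 1 2)) +
        V 1 2 * conj (V 1 2) * (V 2 2 * conj (V 2 2)) + (z + conj z)) := by
    simp only [z, map_mul, Complex.conj_conj]
    linear_combination V 1 2 * conj (V 1 1) * hcol + V 2 2 * conj (V 1 2) * hrow
  rw [← Complex.add_im, hreal]
  simp only [Complex.mul_conj, Complex.add_conj, Complex.neg_im, Complex.add_im,
    Complex.mul_im, Complex.ofReal_re, Complex.ofReal_im]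
  ring
end

section
/- Let V be a 3×3 unitary complex matrix and set J = Im(V₁₁V₂₂ conj(V₁₂) conj(V₂₁)). Then for all indices α, β, i, j ∈ {1,2,3}: Im(V_{αi} V_{βj} conj(V_{αj}) conj(V_{βi})) = J · (∑_{γ=1}^{3} ε_{αβγ}) · (∑_{k=1}^{3} ε_{ijk}), where ε is the totally antisymmetric Levi-Civita symbol with ε₁₂₃ = 1. -/
/-!
Write `Q_{abxy} = V_{ax} V_{by} conj(V_{ay}) conj(V_{bx})`. Swapping `a, b` or `x, y` conjugates `Q`,
so `Im Q` is antisymmetric in both pairs. Summing `Q` over `x` factors out `(V Vᴴ)_{ab} = δ_{ab}`,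
and summing over `a` factors out `(Vᴴ V)_{yx} = δ_{yx}`; in both cases what remains is real, so the
sums of `Im Q` over either index vanish. On `Fin 3` an antisymmetric function whose column sums
vanish is determined by its value at `(0, 1)`, which gives the Levi-Civita factor in `x, y` and,
applied a second time, in `a, b`.
-/

open scoped BigOperators

/-- The Levi-Civita symbol on three indices `0, 1, 2`, with `ε 0 1 2 = 1`
(corresponding to `ε₁₂₃ = 1` in one-based notation). -/
def leviCivita (a b c : Fin 3) : ℤ :=
  (((b : ℤ) - (a : ℤ)) * ((c : ℤ) - (a : ℤ)) * ((c : ℤ) - (b : ℤ))) / 2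

open scoped Matrix ComplexConjugate

lemma eq_mul_sum_leviCivita {f : Fin 3 → Fin 3 → ℝ} (hanti : ∀ x y, f y x = -f x y)
    (hsum : ∀ y, ∑ x, f x y = 0) (x y : Fin 3) :
    f x y = f 0 1 * ((∑ k : Fin 3, leviCivita x y k : ℤ) : ℝ) := by
  have hdiag : ∀ x, f x x = 0 := fun x => by linarith [hanti x x]
  have h0 := hsum 0
  have h1 := hsum 1
  have h2 := hsum 2
  simp only [Fin.sum_univ_three] at h0 h1 h2
  obtain rfl | rfl | rfl : x = 0 ∨ x = 1 ∨ x = 2 := by omega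
  all_goals obtain rfl | rfl | rfl : y = 0 ∨ y = 1 ∨ y = 2 := by omega
  all_goals norm_num [Fin.sum_univ_three, leviCivita] <;>
    linarith [hdiag 0, hdiag 1, hdiag 2, hanti 0 1, hanti 0 2, hanti 1 2]

section Quartet

variable {n : Type*}

def quartet (V : Matrix n n ℂ) (a b x y : n) : ℂ :=
  V a x * V b y * conj (V a y) * conj (V b x)

lemma quartet_swap_rows (V : Matrix n n ℂ) (a b x y : n) :
    quartet V b a x y = conj (quartet V a b x y) := by
  simp only [quartet, map_mul, Complex.conj_conj]
  ring

lemma quartet_swap_cols (V : Matrix n n ℂ) (a b x y : n) :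
    quartet V a b y x = conj (quartet V a b x y) := by
  simp only [quartet, map_mul, Complex.conj_conj]
  ring

variable [Fintype n]

lemma sum_quartet_over_col (V : Matrix n n ℂ) (a b y : n) :
    ∑ x, quartet V a b x y = (V * Vᴴ) a b * (V b y * conj (V a y)) := by
  simp only [quartet, Matrix.mul_apply, Matrix.conjTranspose_apply, Complex.star_def,
    Finset.sum_mul]
  exact Finset.sum_congr rfl fun _ _ => by ring

lemma sum_quartet_over_row (V : Matrix n n ℂ) (b x y : n) :
    ∑ a, quartet V a b x y = (Vᴴ * V) y x * (V b y * conj (V b x)) := by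
  simp only [quartet, Matrix.mul_apply, Matrix.conjTranspose_apply, Complex.star_def,
    Finset.sum_mul]
  exact Finset.sum_congr rfl fun _ _ => by ring

variable [DecidableEq n] {V : Matrix n n ℂ}

lemma sum_im_quartet_over_col (hV : V ∈ Matrix.unitaryGroup n ℂ) (a b y : n) :
    ∑ x, (quartet V a b x y).im = 0 := by
  rw [← Complex.im_sum, sum_quartet_over_col, ← Matrix.star_eq_conjTranspose,
    Matrix.mem_unitaryGroup_iff.mp hV, Matrix.one_apply]
  split_ifs with hab
  · subst hab
    simp [Complex.mul_conj]
  · simp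

lemma sum_im_quartet_over_row (hV : V ∈ Matrix.unitaryGroup n ℂ) (b x y : n) :
    ∑ a, (quartet V a b x y).im = 0 := by
  rw [← Complex.im_sum, sum_quartet_over_row, ← Matrix.star_eq_conjTranspose,
    Matrix.mem_unitaryGroup_iff'.mp hV, Matrix.one_apply]
  split_ifs with hyx
  · subst hyx
    simp [Complex.mul_conj]
  · simp

end Quartet

theorem jarlskog_formula
    (V : Matrix (Fin 3) (Fin 3) ℂ) (hV : V ∈ Matrix.unitaryGroup (Fin 3) ℂ)
    (J : ℝ) (hJ : J = (V 0 0 * V 1 1 * starRingEnd ℂ (V 0 1) * starRingEnd ℂ (V 1 0)).im)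
    (α β i j : Fin 3) :
    (V α i * V β j * starRingEnd ℂ (V α j) * starRingEnd ℂ (V β i)).im =
      J * ((∑ γ : Fin 3, leviCivita α β γ : ℤ) : ℝ) *
        ((∑ k : Fin 3, leviCivita i j k : ℤ) : ℝ) := by
  subst hJ
  change (quartet V α β i j).im = _
  rw [eq_mul_sum_leviCivita (f := fun x y => (quartet V α β x y).im)
      (fun x y => by rw [quartet_swap_cols, Complex.conj_im])
      (sum_im_quartet_over_col hV α β) i j,
    eq_mul_sum_leviCivita (f := fun a b => (quartet V a b 0 1).im)
      (fun a b => by rw [quartet_swap_rows, Complex.conj_im])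
      (sum_im_quartet_over_row hV · 0 1) α β]
  rfl
end

section
/- Let V be a 3×3 unitary complex matrix. Then the 6th-order rephasing invariant I₁ = V₁₁V₂₂V₃₃ conj(V₁₃) conj(V₂₁) conj(V₃₂) satisfies I₁ = −|V₂₂|² · V₁₂V₃₃ conj(V₁₃) conj(V₃₂) − |V₁₃|² · V₂₂V₃₃ conj(V₂₃) conj(V₃₂); that is, I₁ is an integer-coefficient combination of squared moduli of entries of V times the 4th-order invariants J₆ = V₁₂V₃₃V₁₃*V₃₂* and J₉ = V₂₂V₃₃V₂₃*V₃₂*, namely I₁ = −|V₂₂|²J₆ − |V₁₃|²J₉. -/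
/-! Orthogonality of the first two rows of `V`, multiplied by the fourth-order factor
`V₂₂ V₃₃ V₁₃* V₃₂*`, expresses `I₁` through the two fourth-order invariants. -/

theorem Matrix.sum_mul_star_row_eq_zero_of_mem_unitaryGroup {n α : Type*} [Fintype n]
    [DecidableEq n] [CommRing α] [StarRing α] {V : Matrix n n α}
    (hV : V ∈ Matrix.unitaryGroup n α) {i j : n} (hij : i ≠ j) :
    ∑ k, V i k * star (V j k) = 0 := by
  have hentry := congr_fun₂ (Matrix.mem_unitaryGroup_iff.mp hV) i j
  simpa only [Matrix.mul_apply, Matrix.star_apply, Matrix.one_apply_ne hij] using hentry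

theorem sixth_order_invariant_via_fourth_order
    (V : Matrix (Fin 3) (Fin 3) ℂ) (hV : V ∈ Matrix.unitaryGroup (Fin 3) ℂ) :
    V 0 0 * V 1 1 * V 2 2 * starRingEnd ℂ (V 0 2) * starRingEnd ℂ (V 1 0) *
        starRingEnd ℂ (V 2 1) =
      -((Complex.normSq (V 1 1) : ℂ)) *
          (V 0 1 * V 2 2 * starRingEnd ℂ (V 0 2) * starRingEnd ℂ (V 2 1)) -
        ((Complex.normSq (V 0 2) : ℂ)) *
          (V 1 1 * V 2 2 * starRingEnd ℂ (V 1 2) * starRingEnd ℂ (V 2 1)) := by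
  have horth := Matrix.sum_mul_star_row_eq_zero_of_mem_unitaryGroup hV (i := 0) (j := 1)
    (by decide)
  simp only [Fin.sum_univ_three, Complex.star_def] at horth
  rw [← Complex.mul_conj, ← Complex.mul_conj]
  linear_combination (V 1 1 * V 2 2 * starRingEnd ℂ (V 0 2) * starRingEnd ℂ (V 2 1)) * horth
end
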